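/- For all real numbers a with 0 ≤ a ≤ 1 and b > 0, the identity 864(a²+b²)((1-a)²+b²)/b² · (L₂(a,b) - L₂(a,0)) = 32(a(1-a)-b²)² + 5b² holds, and in particular lim_{y→0⁺} L₂(a,y) < L₂(a,b), where L₂(a,b) = (1+a²+(1-a)²+2b²)/54 - b⁴/(32(a²+b²)((1-a)²+b²)). -/
import Mathlib


open Filter

noncomputable def L2 (a b : ℝ) : ℝ :=
  (1 + a^2 + (1 - a)^2 + 2*b^2)/54 - b^4/(32*(a^2 + b^2)*((1 - a)^2 + b^2))

theorem L2_limit_lt (a b : ℝ) (ha0 : 0 ≤ a) (ha1 : a ≤ 1) (hb : 0 < b) :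
    864*(a^2 + b^2)*((1 - a)^2 + b^2)/b^2 * (L2 a b - L2 a 0)
      = 32*(a*(1 - a) - b^2)^2 + 5*b^2 ∧
    Tendsto (fun y => L2 a y) (nhdsWithin 0 (Set.Ioi 0)) (nhds (L2 a 0)) ∧
    L2 a 0 < L2 a b := by
  have hb2 : (b:ℝ)^2 ≠ 0 := by positivity
  have hA : (0:ℝ) < a^2 + b^2 := by positivity
  have hB : (0:ℝ) < (1 - a)^2 + b^2 := by positivity
  have hL0 : L2 a 0 = (1 + a^2 + (1 - a)^2)/54 := by
    simp [L2]
  refine ⟨?_, ?_, ?_⟩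
  · rw [hL0]
    unfold L2
    field_simp
    ring
  · rcases eq_or_ne a 0 with rfl | ha0'
    · have hc : ContinuousAt (fun y : ℝ => (2 + 2*y^2)/54 - y^2/(32*(1 + y^2))) 0 := by
        apply ContinuousAt.sub (by fun_prop)
        exact ContinuousAt.div (by fun_prop) (by fun_prop) (by norm_num)
      have hval : L2 0 0 = (2 + 2*(0:ℝ)^2)/54 - (0:ℝ)^2/(32*(1 + (0:ℝ)^2)) := by
        norm_num [L2]
      have ht : Tendsto (fun y : ℝ => (2 + 2*y^2)/54 - y^2/(32*(1 + y^2)))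
          (nhdsWithin 0 (Set.Ioi 0)) (nhds (L2 0 0)) := by
        rw [hval]
        exact hc.tendsto.mono_left nhdsWithin_le_nhds
      refine ht.congr' ?_
      filter_upwards [self_mem_nhdsWithin] with y hy
      have hy0 : y ≠ 0 := ne_of_gt hy
      have h1 : (1:ℝ) + y^2 ≠ 0 := by positivity
      unfold L2
      field_simp
      ring
    · rcases eq_or_ne a 1 with rfl | ha1'
      · have hc : ContinuousAt (fun y : ℝ => (2 + 2*y^2)/54 - y^2/(32*(1 + y^2))) 0 := by
          apply ContinuousAt.sub (by fun_prop)
          exact ContinuousAt.div (by fun_prop) (by fun_prop) (by norm_num)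
        have hval : L2 1 0 = (2 + 2*(0:ℝ)^2)/54 - (0:ℝ)^2/(32*(1 + (0:ℝ)^2)) := by
          norm_num [L2]
        have ht : Tendsto (fun y : ℝ => (2 + 2*y^2)/54 - y^2/(32*(1 + y^2)))
            (nhdsWithin 0 (Set.Ioi 0)) (nhds (L2 1 0)) := by
          rw [hval]
          exact hc.tendsto.mono_left nhdsWithin_le_nhds
        refine ht.congr' ?_
        filter_upwards [self_mem_nhdsWithin] with y hy
        have hy0 : y ≠ 0 := ne_of_gt hy
        have h1 : (1:ℝ) + y^2 ≠ 0 := by positivity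
        unfold L2
        field_simp
        ring
      · have hA0 : a^2 ≠ 0 := pow_ne_zero _ ha0'
        have hB0 : (1 - a)^2 ≠ 0 := pow_ne_zero _ (sub_ne_zero.mpr (Ne.symm ha1'))
        have hc : ContinuousAt (fun y : ℝ => L2 a y) 0 := by
          unfold L2
          apply ContinuousAt.sub (by fun_prop)
          apply ContinuousAt.div (by fun_prop) (by fun_prop)
          have h1 : 0 < a^2 := lt_of_le_of_ne (sq_nonneg a) (Ne.symm hA0)
          have h2 : 0 < (1 - a)^2 := lt_of_le_of_ne (sq_nonneg _) (Ne.symm hB0)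
          positivity
        exact hc.tendsto.mono_left nhdsWithin_le_nhds
  · have key : L2 a b - L2 a 0
        = (32*(a*(1 - a) - b^2)^2 + 5*b^2) * b^2 / (864*(a^2 + b^2)*((1 - a)^2 + b^2)) := by
      rw [hL0]
      unfold L2
      field_simp
      ring
    have hpos : (0:ℝ) < (32*(a*(1 - a) - b^2)^2 + 5*b^2) * b^2 / (864*(a^2 + b^2)*((1 - a)^2 + b^2)) := by
      positivity
    linarith [key ▸ hpos]
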